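/- arXiv:1207.2598 — 6 statements merged into one kernel-verified Lean document; each statement's English description precedes it below -/
import Mathlib

section
/- The vertex ranking number of the path graph P_n on n vertices equals ⌊log₂ n⌋ + 1. -/
/-- A vertex ranking of a graph `G`: on every simple path between distinct,
equally-colored vertices there is an internal vertex of strictly larger color. -/
def IsVertexRanking {V : Type*} (G : SimpleGraph V) (c : V → ℕ) : Prop :=
  ∀ ⦃x y : V⦄, x ≠ y → ∀ p : G.Walk x y, p.IsPath → c x = c y →
    ∃ z ∈ p.support, z ≠ x ∧ z ≠ y ∧ c x < c z

/-- The vertex ranking number: the minimum number of colors in a vertex ranking. -/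
noncomputable def vertexRankingNumber {V : Type*} (G : SimpleGraph V) : ℕ :=
  sInf {k : ℕ | ∃ c : V → ℕ, (∀ v, c v < k) ∧ IsVertexRanking G c}

/-!
On `P_n` the vertex rankings are exactly the colourings of `0 < 1 < ⋯ < n - 1` in which two
points of equal colour are separated by a point of larger colour.

Colouring `i` by `ν₂(i + 1)` is such a ranking: between two numbers of equal 2-adic valuation
there is one of larger valuation. It uses the colours `0, …, ⌊log₂ n⌋`. Conversely, in such a
ranking of an interval with colours `< k` the point of maximal colour is unique, and the two
intervals on either side of it use colours `< k - 1`, so the interval has fewer than `2 ^ k` points.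
-/

open SimpleGraph

section Ranking

variable {V : Type*} {G : SimpleGraph V} {c : V → ℕ}

lemma IsVertexRanking.of_injective (hc : Function.Injective c) : IsVertexRanking G c :=
  fun _ _ hxy _ _ hcxy => absurd (hc hcxy) hxy

lemma vertexRankingNumber_le {k : ℕ} (hck : ∀ v, c v < k) (hc : IsVertexRanking G c) :
    vertexRankingNumber G ≤ k :=
  Nat.sInf_le ⟨c, hck, hc⟩

lemma exists_isVertexRanking_lt_vertexRankingNumber [Finite V] (G : SimpleGraph V) :
    ∃ c : V → ℕ, (∀ v, c v < vertexRankingNumber G) ∧ IsVertexRanking G c := by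
  obtain ⟨n, ⟨e⟩⟩ := Finite.exists_equiv_fin V
  refine Nat.sInf_mem (s := {k | ∃ c : V → ℕ, (∀ v, c v < k) ∧ IsVertexRanking G c})
    ⟨n, fun v => e v, fun v => (e v).isLt, ?_⟩
  exact .of_injective (Fin.val_injective.comp e.injective)

end Ranking

def IsLinearRanking {α : Type*} [Preorder α] (c : α → ℕ) : Prop :=
  ∀ ⦃x y⦄, x < y → c x = c y → ∃ z, x < z ∧ z < y ∧ c x < c z

theorem IsLinearRanking.card_lt_two_pow {α : Type*} [LinearOrder α] {c : α → ℕ}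
    (hc : IsLinearRanking c) {k : ℕ} {s : Finset α} (hs : (s : Set α).OrdConnected)
    (hsk : ∀ x ∈ s, c x < k) : s.card < 2 ^ k := by
  induction k generalizing s with
  | zero =>
    obtain rfl : s = ∅ := Finset.eq_empty_of_forall_notMem fun x hx => by simpa using hsk x hx
    simp
  | succ k ih =>
    rcases s.eq_empty_or_nonempty with rfl | hne
    · simp
    obtain ⟨z, hz, hz_max⟩ := s.exists_max_image c hne
    have lt_of_ne : ∀ x ∈ s, x ≠ z → c x < c z := by
      intro x hx hxz
      refine (hz_max x hx).lt_of_ne fun hcxz => ?_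
      rcases hxz.lt_or_gt with h | h
      · obtain ⟨u, hxu, huz, hcu⟩ := hc h hcxz
        exact (hz_max u (hs.out hx hz ⟨hxu.le, huz.le⟩)).not_gt (hcxz ▸ hcu)
      · obtain ⟨u, hzu, hux, hcu⟩ := hc h hcxz.symm
        exact (hz_max u (hs.out hz hx ⟨hzu.le, hux.le⟩)).not_gt hcu
    have side : ∀ p : α → Prop, [DecidablePred p] → (∀ x, p x → x ≠ z) →
        ({x | p x} : Set α).OrdConnected → (s.filter p).card < 2 ^ k := by
      intro p _ hpz hp
      refine ih (by rw [Finset.coe_filter]; exact hs.inter hp) fun x hx => ?_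
      rw [Finset.mem_filter] at hx
      have := lt_of_ne x hx.1 (hpz x hx.2)
      have := hsk z hz
      omega
    have hsub : s ⊆ s.filter (· < z) ∪ insert z (s.filter (z < ·)) := by
      intro x hx
      rcases lt_trichotomy x z with h | h | h <;> simp [hx, h]
    have hA := side (· < z) (fun _ => ne_of_lt) Set.ordConnected_Iio
    have hB := side (z < ·) (fun _ => ne_of_gt) Set.ordConnected_Ioi
    calc s.card ≤ (s.filter (· < z)).card + ((s.filter (z < ·)).card + 1) :=
          (Finset.card_le_card hsub).trans <|
            (Finset.card_union_le _ _).trans (Nat.add_le_add_left (Finset.card_insert_le _ _) _)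
      _ < 2 ^ (k + 1) := by rw [pow_succ]; omega

namespace SimpleGraph

variable {n : ℕ}

lemma Walk.mem_support_of_mem_uIcc_pathGraph {x y z : Fin n} (p : (pathGraph n).Walk x y)
    (hz : z ∈ Set.uIcc x y) : z ∈ p.support := by
  induction p with
  | nil => simpa using hz
  | @cons a w y h q ih =>
    rw [support_cons, List.mem_cons]
    refine (eq_or_ne z a).imp id fun hza => ih ?_
    rw [pathGraph_adj] at h
    rw [Set.mem_uIcc, Fin.le_def, Fin.le_def] at hz ⊢
    have := Fin.val_ne_of_ne hza
    omega

lemma pathGraph_exists_isPath_support_subset_Icc {x y : Fin n} (hxy : x ≤ y) :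
    ∃ p : (pathGraph n).Walk x y, p.IsPath ∧ ∀ z ∈ p.support, z ∈ Set.Icc x y := by
  obtain ⟨d, hd⟩ := Nat.exists_eq_add_of_le (Fin.le_def.1 hxy)
  induction d generalizing y with
  | zero =>
    obtain rfl : x = y := Fin.ext (by omega)
    exact ⟨.nil, .nil, by simp⟩
  | succ d ih =>
    let y' : Fin n := ⟨x + d, by omega⟩
    obtain ⟨p, hp, hp_sub⟩ := ih (y := y') (Fin.le_def.2 (by simp only [y']; omega)) rfl
    have hy' : y' < y := Fin.lt_def.2 (by simp only [y']; omega)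
    have hadj : (pathGraph n).Adj y' y := pathGraph_adj.2 (.inl (by simp only [y']; omega))
    refine ⟨p.concat hadj, hp.concat (fun hy => (hp_sub y hy).2.not_gt hy') hadj, fun z hz => ?_⟩
    rw [Walk.support_concat, List.mem_append, List.mem_singleton] at hz
    rcases hz with hz | rfl
    · exact ⟨(hp_sub z hz).1, (hp_sub z hz).2.trans hy'.le⟩
    · exact ⟨hxy, le_rfl⟩

theorem isVertexRanking_pathGraph_iff {c : Fin n → ℕ} :
    IsVertexRanking (pathGraph n) c ↔ IsLinearRanking c := by
  constructor
  · intro hc x y hxy hcxy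
    obtain ⟨p, hp, hp_sub⟩ := pathGraph_exists_isPath_support_subset_Icc hxy.le
    obtain ⟨z, hz, hzx, hzy, hcz⟩ := hc hxy.ne p hp hcxy
    exact ⟨z, (hp_sub z hz).1.lt_of_ne' hzx, (hp_sub z hz).2.lt_of_ne hzy, hcz⟩
  · intro hc x y hxy p _ hcxy
    rcases hxy.lt_or_gt with h | h
    · obtain ⟨z, hxz, hzy, hcz⟩ := hc h hcxy
      exact ⟨z, p.mem_support_of_mem_uIcc_pathGraph (Set.mem_uIcc.2 (.inl ⟨hxz.le, hzy.le⟩)),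
        hxz.ne', hzy.ne, hcz⟩
    · obtain ⟨z, hyz, hzx, hcz⟩ := hc h hcxy.symm
      exact ⟨z, p.mem_support_of_mem_uIcc_pathGraph (Set.mem_uIcc.2 (.inr ⟨hyz.le, hzx.le⟩)),
        hzx.ne, hyz.ne', hcxy ▸ hcz⟩

end SimpleGraph

lemma padicValNat_two_pow_mul_of_odd {k m : ℕ} (hm : Odd m) : padicValNat 2 (2 ^ k * m) = k := by
  rw [padicValNat.mul (by positivity) hm.pos.ne', padicValNat.prime_pow,
    padicValNat.eq_zero_of_not_dvd hm.not_two_dvd_nat, add_zero]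

/-- Write `a = 2ᵛ a'`, `b = 2ᵛ b'` with `a' < b'` odd; then `2ᵛ (a' + 1)` lies strictly between. -/
lemma exists_padicValNat_two_lt_of_eq {a b : ℕ} (ha : a ≠ 0) (hab : a < b)
    (h : padicValNat 2 a = padicValNat 2 b) :
    ∃ m, a < m ∧ m < b ∧ padicValNat 2 a < padicValNat 2 m := by
  obtain ⟨v, a', ha', rfl⟩ := Nat.exists_eq_two_pow_mul_odd ha
  obtain ⟨w, b', hb', rfl⟩ := Nat.exists_eq_two_pow_mul_odd (by omega : b ≠ 0)
  rw [padicValNat_two_pow_mul_of_odd ha', padicValNat_two_pow_mul_of_odd hb'] at h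
  subst h
  have hab' : a' + 1 < b' := by
    have := Nat.lt_of_mul_lt_mul_left hab
    rw [Nat.odd_iff] at ha' hb'
    omega
  refine ⟨2 ^ v * (a' + 1), by gcongr; omega, by gcongr, ?_⟩
  rw [padicValNat_two_pow_mul_of_odd ha', ← Nat.succ_le_iff,
    ← padicValNat_dvd_iff_le (by positivity), pow_succ]
  exact mul_dvd_mul_left _ (even_iff_two_dvd.1 ha'.add_one)

lemma isLinearRanking_padicValNat_two_succ (n : ℕ) :
    IsLinearRanking fun v : Fin n => padicValNat 2 (v + 1) := by
  intro x y hxy hcxy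
  obtain ⟨m, hxm, hmy, hcm⟩ :=
    exists_padicValNat_two_lt_of_eq x.val.succ_ne_zero (by simpa using hxy) hcxy
  refine ⟨⟨m - 1, by omega⟩, Fin.lt_def.2 (show x.val < m - 1 by omega),
    Fin.lt_def.2 (show m - 1 < y.val by omega), ?_⟩
  simpa [Nat.sub_add_cancel (by omega : 1 ≤ m)] using hcm

/-- The vertex ranking number of the path graph `P_n` equals `⌊log₂ n⌋ + 1`. -/
theorem vertexRankingNumber_pathGraph (n : ℕ) (hn : 1 ≤ n) :
    vertexRankingNumber (SimpleGraph.pathGraph n) = Nat.log 2 n + 1 := by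
  have hν_lt : ∀ v : Fin n, padicValNat 2 (v + 1) < Nat.log 2 n + 1 := fun v =>
    Nat.lt_succ_of_le ((padicValNat_le_nat_log _).trans (Nat.log_mono_right v.isLt))
  refine le_antisymm (vertexRankingNumber_le hν_lt
    (isVertexRanking_pathGraph_iff.2 (isLinearRanking_padicValNat_two_succ n))) ?_
  obtain ⟨c, hc_lt, hc⟩ := exists_isVertexRanking_lt_vertexRankingNumber (pathGraph n)
  have hn_lt : n < 2 ^ vertexRankingNumber (pathGraph n) := by
    simpa using (isVertexRanking_pathGraph_iff.1 hc).card_lt_two_pow (s := Finset.univ)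
      (by rw [Finset.coe_univ]; exact Set.ordConnected_univ) (fun v _ => hc_lt v)
  exact Nat.log_lt_of_lt_pow (by omega) hn_lt
end

section
/- Let H=(X,R) be an I-type hypergraph with a unique-max coloring c, and let S be a finite set of ranges such that each range in S is assigned a distinct 'stabbing point' which is its unique maximum-color point. Then any two distinct ranges in S whose stabbing points have the same color are disjoint. -/
/-- A hypergraph (ranges `R` over ground set `X`) is I-type if the union of two
intersecting ranges is a range. -/
def IType {X : Type*} [DecidableEq X] (R : Set (Finset X)) : Prop :=
  ∀ r₁ ∈ R, ∀ r₂ ∈ R, (r₁ ∩ r₂).Nonempty → r₁ ∪ r₂ ∈ R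

/-- A coloring is unique-max if every range has exactly one point achieving the
maximum color within the range. -/
def UniqueMax {X : Type*} (R : Set (Finset X)) (c : X → ℕ) : Prop :=
  ∀ r ∈ R, ∃! x, x ∈ r ∧ c x = r.sup c

/-- Both points attain the maximum of the range `r₁ ∪ r₂`, which is therefore unique. -/
theorem UniqueMax.eq_of_not_disjoint {X : Type*} [DecidableEq X] {R : Set (Finset X)}
    {c : X → ℕ} (hI : IType R) (hum : UniqueMax R c) {r₁ r₂ : Finset X} (h₁ : r₁ ∈ R)
    (h₂ : r₂ ∈ R) (hr : ¬Disjoint r₁ r₂) {x₁ x₂ : X} (hx₁ : x₁ ∈ r₁) (hx₂ : x₂ ∈ r₂)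
    (hc₁ : c x₁ = r₁.sup c) (hc₂ : c x₂ = r₂.sup c) (hc : c x₁ = c x₂) : x₁ = x₂ := by
  have hu : r₁ ∪ r₂ ∈ R := hI r₁ h₁ r₂ h₂ (Finset.not_disjoint_iff_nonempty_inter.mp hr)
  have hsup : (r₁ ∪ r₂).sup c = c x₁ := by
    rw [Finset.sup_union, ← hc₁, ← hc₂, hc, max_self]
  exact (hum _ hu).unique ⟨Finset.mem_union_left _ hx₁, hsup.symm⟩
    ⟨Finset.mem_union_right _ hx₂, hc.symm.trans hsup.symm⟩

/-- Let `S` be a finite set of ranges of an I-type hypergraph with a unique-max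
coloring, where each range is assigned its unique maximum-color point as its
stabbing point, and distinct ranges in `S` get distinct stabbing points.  Then
any two distinct ranges of `S` whose stabbing points have the same color are
disjoint. -/
theorem sameColor_stab_disjoint {X : Type*} [DecidableEq X]
    (R : Set (Finset X)) (hI : IType R) (c : X → ℕ) (hum : UniqueMax R c)
    (S : Finset (Finset X)) (hS : ∀ r ∈ S, r ∈ R)
    (stab : Finset X → X)
    (hstab : ∀ r ∈ S, stab r ∈ r ∧ c (stab r) = r.sup c)
    (hinj : ∀ r₁ ∈ S, ∀ r₂ ∈ S, r₁ ≠ r₂ → stab r₁ ≠ stab r₂) :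
    ∀ r₁ ∈ S, ∀ r₂ ∈ S, r₁ ≠ r₂ → c (stab r₁) = c (stab r₂) →
      Disjoint r₁ r₂ := by
  intro r₁ h₁ r₂ h₂ hne hc
  by_contra hr
  exact hinj r₁ h₁ r₂ h₂ hne <| hum.eq_of_not_disjoint hI (hS r₁ h₁) (hS r₂ h₂) hr
    (hstab r₁ h₁).1 (hstab r₂ h₂).1 (hstab r₁ h₁).2 (hstab r₂ h₂).2 hc
end

section
/- Consider the hypergraph on ground set X={1,…,n} whose ranges are all discrete intervals [i,j] with 1≤i≤j≤n. The minimum number of colors in a unique-max coloring of this hypergraph is exactly ⌊log₂ n⌋ + 1. -/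
/-!
The ruler coloring `x ↦ ν₂(x)` is unique-max on every interval of positive integers: if `u < v`
have the same maximal valuation `V`, then `u + 2 ^ V` lies in `(u, v]` and is divisible by
`2 ^ (V + 1)`. It uses `⌊log₂ n⌋ + 1` colors on `{1, …, n}`.

Conversely, the unique maximum of a unique-max coloring splits an interval into two intervals
colored with one color fewer, so by induction on the number of colors `k` an interval of
length `m` colored with colors `< k` has `m < 2 ^ k`.
-/

open Finset

def IsUniqueMaxOn (c : ℕ → ℕ) (s : Set ℕ) : Prop :=
  ∀ i j, Set.Icc i j ⊆ s → i ≤ j → ∃! x, x ∈ Icc i j ∧ c x = (Icc i j).sup c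

lemma IsUniqueMaxOn.mono {c : ℕ → ℕ} {s t : Set ℕ} (hc : IsUniqueMaxOn c t) (hst : s ⊆ t) :
    IsUniqueMaxOn c s :=
  fun i j hij hle => hc i j (hij.trans hst) hle

lemma lt_of_existsUnique_eq_sup {α β : Type*} [LinearOrder β] [OrderBot β] {t : Finset α}
    {c : α → β} {x : α} (huniq : ∀ y, y ∈ t ∧ c y = t.sup c → y = x) (hx : c x = t.sup c)
    {y : α} (hy : y ∈ t) (hyx : y ≠ x) : c y < c x :=
  (hx ▸ le_sup hy).lt_of_ne fun h => hyx (huniq y ⟨hy, h.trans hx⟩)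

lemma lt_two_pow_of_isUniqueMaxOn_Ico {c : ℕ → ℕ} {k : ℕ} :
    ∀ {a m : ℕ}, IsUniqueMaxOn c (Set.Ico a (a + m)) → (∀ x ∈ Set.Ico a (a + m), c x < k) →
      m < 2 ^ k := by
  induction k with
  | zero =>
    intro a m _ hk
    by_contra! hm
    exact Nat.not_lt_zero _ (hk a ⟨le_rfl, by omega⟩)
  | succ k ih =>
    intro a m hu hk
    rcases Nat.eq_zero_or_pos m with rfl | hm
    · positivity
    obtain ⟨x, ⟨hx, hxmax⟩, huniq⟩ :=
      hu a (a + m - 1) (fun y ⟨hay, hym⟩ => ⟨hay, by omega⟩) (by omega)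
    rw [mem_Icc] at hx
    have hsmaller : ∀ y ∈ Set.Ico a (a + m), y ≠ x → c y < k := fun y ⟨hay, hym⟩ hyx =>
      (lt_of_existsUnique_eq_sup huniq hxmax (mem_Icc.2 ⟨hay, by omega⟩) hyx).trans_le
        (Nat.lt_succ_iff.1 (hk x ⟨hx.1, by omega⟩))
    have hleft : x - a < 2 ^ k :=
      ih (a := a) (m := x - a) (hu.mono (Set.Ico_subset_Ico le_rfl (by omega)))
        fun y ⟨hay, hyx⟩ => hsmaller y ⟨hay, by omega⟩ (by omega)
    have hright : a + m - (x + 1) < 2 ^ k :=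
      ih (a := x + 1) (m := a + m - (x + 1)) (hu.mono (Set.Ico_subset_Ico (by omega) (by omega)))
        fun y ⟨hxy, hym⟩ => hsmaller y ⟨by omega, by omega⟩ (by omega)
    rw [pow_succ]
    omega

lemma exists_lt_padicValNat_two_of_lt {u v : ℕ} (hu : u ≠ 0) (huv : u < v)
    (hval : padicValNat 2 u ≤ padicValNat 2 v) :
    ∃ z, u < z ∧ z ≤ v ∧ padicValNat 2 u < padicValNat 2 z := by
  have hmax : ¬ 2 ^ (padicValNat 2 u + 1) ∣ u := pow_succ_padicValNat_not_dvd hu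
  obtain ⟨q, hq⟩ : 2 ^ padicValNat 2 u ∣ v := (pow_dvd_pow 2 hval).trans pow_padicValNat_dvd
  obtain ⟨p, hp⟩ : 2 ^ padicValNat 2 u ∣ u := pow_padicValNat_dvd
  generalize padicValNat 2 u = V at hmax hq hp ⊢
  subst hp hq
  have hp_odd : ¬ 2 ∣ p := fun ⟨t, ht⟩ => hmax ⟨t, by rw [ht, pow_succ, mul_assoc]⟩
  have hpq : p < q := lt_of_mul_lt_mul_left huv (Nat.zero_le _)
  refine ⟨2 ^ V * (p + 1), by gcongr; omega, by gcongr; omega, ?_⟩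
  obtain ⟨t, ht⟩ : 2 ∣ p + 1 := by omega
  exact (padicValNat_dvd_iff_le (by positivity)).1 ⟨t, by rw [ht, pow_succ, mul_assoc]⟩

lemma isUniqueMaxOn_padicValNat_two : IsUniqueMaxOn (padicValNat 2) (Set.Ici 1) := by
  intro i j hij hle
  have hi : 1 ≤ i := hij ⟨le_rfl, hle⟩
  obtain ⟨x, hx, hxmax⟩ := exists_mem_eq_sup (Icc i j) (nonempty_Icc.2 hle) (padicValNat 2)
  have no_second_max : ∀ u ∈ Icc i j, ∀ v ∈ Icc i j, u < v →
      padicValNat 2 u = (Icc i j).sup (padicValNat 2) →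
      padicValNat 2 v < (Icc i j).sup (padicValNat 2) := by
    intro u hu v hv huv hum
    by_contra! hvm
    obtain ⟨z, huz, hzv, hz⟩ :=
      exists_lt_padicValNat_two_of_lt (by rw [mem_Icc] at hu; omega) huv (hum ▸ hvm)
    have hzI : z ∈ Icc i j := by rw [mem_Icc] at hu hv ⊢; omega
    exact absurd (le_sup hzI) (hum ▸ hz).not_ge
  refine ⟨x, ⟨hx, hxmax.symm⟩, fun y ⟨hy, hymax⟩ => ?_⟩
  by_contra hyx
  rcases Nat.lt_or_gt_of_ne hyx with h | h
  · exact (no_second_max y hy x hx h hymax).ne hxmax.symm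
  · exact (no_second_max x hx y hy h hxmax.symm).ne hymax

lemma padicValNat_two_le_log {x n : ℕ} (hx : x ≠ 0) (hxn : x ≤ n) :
    padicValNat 2 x ≤ Nat.log 2 n :=
  Nat.le_log_of_pow_le one_lt_two ((Nat.le_of_dvd (by omega) pow_padicValNat_dvd).trans hxn)

/-- The minimum number of colors in a unique-max coloring of the hypergraph of
discrete intervals on `{1,…,n}` is exactly `⌊log₂ n⌋ + 1`. -/
theorem uniqueMaxChromatic_intervals (n : ℕ) (hn : 1 ≤ n) :
    sInf {k : ℕ | ∃ c : ℕ → ℕ, (∀ x ∈ Finset.Icc 1 n, c x < k) ∧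
        ∀ i j : ℕ, 1 ≤ i → i ≤ j → j ≤ n →
          ∃! x, x ∈ Finset.Icc i j ∧ c x = (Finset.Icc i j).sup c}
      = Nat.log 2 n + 1 := by
  refine IsLeast.csInf_eq ⟨⟨padicValNat 2, ?_, ?_⟩, ?_⟩
  · intro x hx
    rw [mem_Icc] at hx
    exact Nat.lt_succ_of_le (padicValNat_two_le_log (by omega) hx.2)
  · exact fun i j hi hij _ => isUniqueMaxOn_padicValNat_two i j (fun y hy => hi.trans hy.1) hij
  · rintro k ⟨c, hcol, hum⟩
    have hu : IsUniqueMaxOn c (Set.Ico 1 (1 + n)) := fun i j hij hle =>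
      have ⟨h1i, hjn⟩ := (Set.Icc_subset_Ico_iff hle).1 hij
      hum i j h1i hle (by omega)
    have hlt : n < 2 ^ k := lt_two_pow_of_isUniqueMaxOn_Ico hu
      fun x ⟨h1x, hxn⟩ => hcol x (mem_Icc.2 ⟨h1x, by omega⟩)
    exact Nat.log_lt_of_lt_pow (by omega) hlt
end

section
/- Any deterministic online hitting set algorithm for the hypergraph of discrete intervals on n points has competitive ratio at least ⌊log₂ n⌋ + 1: there exists a nested decreasing sequence of intervals r₁ ⊋ r₂ ⊋ ⋯ ⊋ r_k with k = ⌊log₂ n⌋ + 1 such that, for any strategy of picking one stabbing point per interval upon arrival, each interval is unstabbed by previously chosen points, while the single point in r_k stabs all of them (so the optimum hitting set has size 1). -/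
/-!
The adversary answers each pick `x` in the current interval `[a, b]` by presenting the larger of
the two pieces `[a, x - 1]` and `[x + 1, b]`. An interval of `m` points minus one point leaves a
piece of at least `⌊m / 2⌋` points, so the `i`-th interval still has at least `⌊n / 2 ^ i⌋ ≥ 1`
points as long as `i ≤ ⌊log₂ n⌋`. The intervals are nested, so each one avoids all earlier picks
and any point of the last one stabs them all.
-/

open Finset

def largerSide (a b x : ℕ) : ℕ × ℕ :=
  if b - x ≤ x - a then (a, x - 1) else (x + 1, b)

section largerSide

variable {a b x : ℕ}

lemma one_le_largerSide_fst (ha : 1 ≤ a) : 1 ≤ (largerSide a b x).1 := by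
  unfold largerSide
  split_ifs <;> simp [ha]

lemma Icc_largerSide_subset (hx : x ∈ Icc a b) :
    Icc (largerSide a b x).1 (largerSide a b x).2 ⊆ Icc a b := by
  rw [mem_Icc] at hx
  unfold largerSide
  split_ifs
  · exact Icc_subset_Icc le_rfl (by omega)
  · exact Icc_subset_Icc (by omega) le_rfl

lemma notMem_Icc_largerSide (hx : 0 < x) :
    x ∉ Icc (largerSide a b x).1 (largerSide a b x).2 := by
  unfold largerSide
  split_ifs <;> simp only [mem_Icc] <;> omega

lemma card_div_two_le_card_Icc_largerSide (hx : x ∈ Icc a b) :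
    #(Icc a b) / 2 ≤ #(Icc (largerSide a b x).1 (largerSide a b x).2) := by
  rw [mem_Icc] at hx
  unfold largerSide
  split_ifs <;> simp only [Nat.card_Icc] <;> omega

end largerSide

section adversary

variable (pick : List (Finset ℕ) → Finset ℕ → ℕ) (n : ℕ)

/-- A state holds the endpoints of the interval about to be presented and the list of the
intervals presented before it. -/
def adversaryStep (s : (ℕ × ℕ) × List (Finset ℕ)) : (ℕ × ℕ) × List (Finset ℕ) :=
  (largerSide s.1.1 s.1.2 (pick s.2 (Icc s.1.1 s.1.2)), s.2 ++ [Icc s.1.1 s.1.2])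

def adversaryState (i : ℕ) : (ℕ × ℕ) × List (Finset ℕ) :=
  (adversaryStep pick)^[i] ((1, n), [])

def adversaryInterval (i : ℕ) : Finset ℕ :=
  Icc (adversaryState pick n i).1.1 (adversaryState pick n i).1.2

lemma adversaryState_succ (i : ℕ) :
    adversaryState pick n (i + 1) = adversaryStep pick (adversaryState pick n i) :=
  Function.iterate_succ_apply' ..

lemma adversaryInterval_zero : adversaryInterval pick n 0 = Icc 1 n := rfl

lemma adversaryState_snd (i : ℕ) :
    (adversaryState pick n i).2 = (List.range i).map (adversaryInterval pick n) := by
  induction i with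
  | zero => rfl
  | succ i ih =>
    rw [adversaryState_succ, adversaryStep, ih, List.range_succ, List.map_append]
    rfl

lemma one_le_adversaryState_fst (i : ℕ) : 1 ≤ (adversaryState pick n i).1.1 := by
  induction i with
  | zero => exact le_rfl
  | succ i ih => rw [adversaryState_succ]; exact one_le_largerSide_fst ih

lemma adversaryState_fst_succ (i : ℕ) :
    (adversaryState pick n (i + 1)).1 =
      largerSide (adversaryState pick n i).1.1 (adversaryState pick n i).1.2
        (pick ((List.range i).map (adversaryInterval pick n)) (adversaryInterval pick n i)) := by
  rw [adversaryState_succ, adversaryStep, adversaryState_snd]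
  rfl

variable {pick} (hpick : ∀ l r, r.Nonempty → pick l r ∈ r)
include hpick

lemma pick_notMem_adversaryInterval_succ (i : ℕ) (hi : (adversaryInterval pick n i).Nonempty) :
    pick ((List.range i).map (adversaryInterval pick n)) (adversaryInterval pick n i) ∉
      adversaryInterval pick n (i + 1) := by
  have hx := hpick ((List.range i).map (adversaryInterval pick n)) _ hi
  rw [adversaryInterval.eq_1 pick n (i + 1), adversaryState_fst_succ]
  exact notMem_Icc_largerSide ((one_le_adversaryState_fst pick n i).trans (mem_Icc.mp hx).1)

lemma adversaryInterval_succ_ssubset (i : ℕ) (hi : (adversaryInterval pick n i).Nonempty) :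
    adversaryInterval pick n (i + 1) ⊂ adversaryInterval pick n i := by
  have hx := hpick ((List.range i).map (adversaryInterval pick n)) _ hi
  refine (ssubset_iff_of_subset ?_).mpr ⟨_, hx, pick_notMem_adversaryInterval_succ n hpick i hi⟩
  rw [adversaryInterval.eq_1 pick n (i + 1), adversaryState_fst_succ]
  exact Icc_largerSide_subset hx

lemma div_two_pow_le_card_adversaryInterval (i : ℕ) :
    n / 2 ^ i ≤ #(adversaryInterval pick n i) := by
  induction i with
  | zero => simp [adversaryInterval_zero]
  | succ i ih =>
    rw [pow_succ, ← Nat.div_div_eq_div_mul]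
    rcases (adversaryInterval pick n i).eq_empty_or_nonempty with hi | hi
    · rw [hi, card_empty, Nat.le_zero] at ih
      simp [ih]
    · have hx := hpick ((List.range i).map (adversaryInterval pick n)) _ hi
      rw [adversaryInterval.eq_1 pick n (i + 1), adversaryState_fst_succ]
      exact (Nat.div_le_div_right ih).trans (card_div_two_le_card_Icc_largerSide hx)

lemma adversaryInterval_nonempty (hn : 1 ≤ n) {i : ℕ} (hi : i ≤ Nat.log 2 n) :
    (adversaryInterval pick n i).Nonempty := by
  have hpow : 2 ^ i ≤ n :=
    (Nat.pow_le_pow_right two_pos hi).trans (Nat.pow_log_le_self 2 (by omega))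
  rw [← card_pos]
  exact ((Nat.one_le_div_iff (by positivity)).mpr hpow).trans
    (div_two_pow_le_card_adversaryInterval n hpick i)

lemma strictAntiOn_adversaryInterval (hn : 1 ≤ n) :
    StrictAntiOn (adversaryInterval pick n) (Set.Iic (Nat.log 2 n)) :=
  strictAntiOn_of_succ_lt Set.ordConnected_Iic fun i _ hi _ ↦
    adversaryInterval_succ_ssubset n hpick i (adversaryInterval_nonempty n hpick hn hi)

end adversary

/-- Lower bound for online hitting of discrete intervals on `{1,…,n}`: against
any deterministic strategy `pick` (choosing, given the history of previously
presented intervals and the current interval, one point of the current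
interval), there is a strictly decreasing nested sequence of
`k = ⌊log₂ n⌋ + 1` intervals, starting with `[1,n]`, such that each presented
interval avoids all previously picked points (so the algorithm uses `k` distinct
points), while every point of the last interval stabs all of them (so the
optimum hitting set has size `1`). -/
theorem online_intervals_lower_bound (n : ℕ) (hn : 1 ≤ n)
    (pick : List (Finset ℕ) → Finset ℕ → ℕ)
    (hpick : ∀ l r, r.Nonempty → pick l r ∈ r) :
    ∃ r : ℕ → Finset ℕ,
      (∀ i < Nat.log 2 n + 1, ∃ a b : ℕ, 1 ≤ a ∧ a ≤ b ∧ b ≤ n ∧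
          r i = Finset.Icc a b) ∧
      r 0 = Finset.Icc 1 n ∧
      (∀ i, i + 1 < Nat.log 2 n + 1 → r (i + 1) ⊂ r i) ∧
      (∀ i j, i < j → j < Nat.log 2 n + 1 →
          pick ((List.range i).map r) (r i) ∉ r j) ∧
      (∀ x ∈ r (Nat.log 2 n), ∀ i < Nat.log 2 n + 1, x ∈ r i) := by
  set r := adversaryInterval pick n
  have hne : ∀ i ≤ Nat.log 2 n, (r i).Nonempty := fun i ↦ adversaryInterval_nonempty n hpick hn
  have hanti := strictAntiOn_adversaryInterval n hpick hn
  have hsub : ∀ i j, i ≤ j → j ≤ Nat.log 2 n → r j ⊆ r i := fun i j hij hj ↦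
    hanti.antitoneOn (Set.mem_Iic.mpr (hij.trans hj)) hj hij
  refine ⟨r, fun i hi ↦ ?_, rfl,
    fun i hi ↦ hanti (Set.mem_Iic.mpr (by omega)) (Set.mem_Iic.mpr (by omega)) i.lt_succ_self,
    fun i j hij hj hx ↦ ?_, fun x hx i hi ↦ hsub i _ (by omega) le_rfl hx⟩
  · have hab := nonempty_Icc.mp (hne i (by omega))
    have hbounds := (Icc_subset_Icc_iff hab).mp (hsub 0 i (Nat.zero_le i) (by omega))
    exact ⟨_, _, hbounds.1, hab, hbounds.2, rfl⟩
  · exact pick_notMem_adversaryInterval_succ n hpick i (hne i (by omega))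
      (hsub (i + 1) j hij (by omega) hx)
end

section
/- Let H=(X,R) be an I-type hypergraph that is separable (every singleton {x} is a range). Then the best competitive ratio of a deterministic online hitting set algorithm for H equals the unique-max chromatic number of H: ρ(H) = χ_um(H). -/
/-- `A` is a (deterministic) online hitting set algorithm: it maps a finite
sequence of presented ranges to a hitting set, never removes chosen points, and
always stabs all presented ranges. -/
def IsOnlineAlg {X : Type*} [DecidableEq X] (R : Set (Finset X))
    (A : List (Finset X) → Finset X) : Prop :=
  (∀ l r, A l ⊆ A (l ++ [r])) ∧
  (∀ l : List (Finset X), (∀ r ∈ l, r ∈ R) → ∀ r ∈ l, (A l ∩ r).Nonempty)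

/-- `A` is `k`-competitive: on every input sequence of ranges, the hitting set
it outputs is at most `k` times larger than any (hence the optimal) hitting set
of the presented ranges. -/
def IsCompetitive {X : Type*} [DecidableEq X] (R : Set (Finset X))
    (A : List (Finset X) → Finset X) (k : ℕ) : Prop :=
  ∀ l : List (Finset X), (∀ r ∈ l, r ∈ R) →
    ∀ S : Finset X, (∀ r ∈ l, (S ∩ r).Nonempty) → (A l).card ≤ k * S.card

/-!
A unique-max coloring `c` with `k` colors gives the online algorithm that adds the
maximum-color point of every presented range. It is `k`-competitive: a point added for the
range `r` is sent to its color and to a point of the given hitting set in `r`; two points with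
the same image are the maxima of intersecting ranges of equal maximum color, hence both the
unique maximum of the union of these ranges, which is again a range.

Conversely, against a `k`-competitive algorithm an adversary colors a region `U` that is
contained in all ranges presented so far and avoided by the algorithm. It presents a maximal
range `M ⊆ U`; the algorithm must pick new points of `M`, which get the top colors, and the
rest of `M` and `U \ M` are colored recursively. Maximality of `M` and the I-type property
make every range inside `U` lie in `M` or in `U \ M`, and competitiveness against a single
point of `M` bounds the total number of colors by `k`.
-/

open Finset

section UniqueMax

variable {X : Type*}

def HasUniqueMax (c : X → ℕ) (r : Finset X) : Prop :=
  ∃! x, x ∈ r ∧ c x = r.sup c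

theorem HasUniqueMax.congr {c c' : X → ℕ} {r : Finset X} (h : HasUniqueMax c' r)
    (hcc' : ∀ y ∈ r, c y = c' y) : HasUniqueMax c r := by
  have hsup : r.sup c = r.sup c' := sup_congr rfl hcc'
  obtain ⟨x, ⟨hx, hxc⟩, huniq⟩ := h
  refine ⟨x, ⟨hx, by rw [hcc' x hx, hsup, hxc]⟩, ?_⟩
  rintro y ⟨hy, hyc⟩
  exact huniq y ⟨hy, by rw [← hcc' y hy, ← hsup, hyc]⟩

theorem hasUniqueMax_of_lt {c : X → ℕ} {r : Finset X} {a : X} (ha : a ∈ r)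
    (hlt : ∀ y ∈ r, y ≠ a → c y < c a) : HasUniqueMax c r := by
  have hsup : r.sup c = c a := by
    refine le_antisymm (Finset.sup_le fun y hy => ?_) (le_sup ha)
    rcases eq_or_ne y a with rfl | hya
    · exact le_rfl
    · exact (hlt y hy hya).le
  refine ⟨a, ⟨ha, hsup.symm⟩, fun y ⟨hy, hyc⟩ => ?_⟩
  by_contra hya
  exact (hlt y hy hya).ne (hyc.trans hsup)

def UniqueMaxColorableOn (R : Set (Finset X)) (U : Finset X) (m : ℕ) : Prop :=
  ∃ c : X → ℕ, (∀ x ∈ U, c x < m) ∧ ∀ r ∈ R, r ⊆ U → HasUniqueMax c r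

theorem UniqueMaxColorableOn.mono {R : Set (Finset X)} {U : Finset X} {m m' : ℕ}
    (h : UniqueMaxColorableOn R U m) (hm : m ≤ m') : UniqueMaxColorableOn R U m' := by
  obtain ⟨c, hcm, hc⟩ := h
  exact ⟨c, fun x hx => (hcm x hx).trans_le hm, hc⟩

theorem uniqueMaxColorableOn_empty {R : Set (Finset X)} (hne : ∀ r ∈ R, r.Nonempty) (m : ℕ) :
    UniqueMaxColorableOn R ∅ m :=
  ⟨fun _ => 0, by simp, fun r hr hrU => absurd (subset_empty.1 hrU) (hne r hr).ne_empty⟩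

variable [DecidableEq X]

section MaxColorAlgorithm

theorem IType.eq_of_hasUniqueMax {R : Set (Finset X)} (hI : IType R) {c : X → ℕ}
    (hc : ∀ r ∈ R, HasUniqueMax c r) {r₁ r₂ : Finset X} (hr₁ : r₁ ∈ R) (hr₂ : r₂ ∈ R)
    (hr₁₂ : (r₁ ∩ r₂).Nonempty) {x₁ x₂ : X} (hx₁ : x₁ ∈ r₁) (hx₂ : x₂ ∈ r₂)
    (h₁ : c x₁ = r₁.sup c) (h₂ : c x₂ = r₂.sup c) (hx₁₂ : c x₁ = c x₂) : x₁ = x₂ := by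
  have hsup : (r₁ ∪ r₂).sup c = c x₁ := by rw [sup_union, ← h₁, ← h₂, hx₁₂, sup_idem]
  exact (hc _ (hI r₁ hr₁ r₂ hr₂ hr₁₂)).unique ⟨mem_union_left _ hx₁, hsup.symm⟩
    ⟨mem_union_right _ hx₂, by rw [hsup, hx₁₂]⟩

def maxColorAlg (c : X → ℕ) (l : List (Finset X)) : Finset X :=
  l.toFinset.biUnion fun r => r.filter fun y => c y = r.sup c

theorem mem_maxColorAlg {c : X → ℕ} {l : List (Finset X)} {x : X} :
    x ∈ maxColorAlg c l ↔ ∃ r ∈ l, x ∈ r ∧ c x = r.sup c := by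
  simp [maxColorAlg]

theorem isOnlineAlg_maxColorAlg {R : Set (Finset X)} (hne : ∀ r ∈ R, r.Nonempty)
    (c : X → ℕ) : IsOnlineAlg R (maxColorAlg c) := by
  refine ⟨fun l r x hx => ?_, fun l hl r hr => ?_⟩
  · obtain ⟨r', hr', hxr'⟩ := mem_maxColorAlg.1 hx
    exact mem_maxColorAlg.2 ⟨r', List.mem_append_left _ hr', hxr'⟩
  · obtain ⟨x, hx, hxmax⟩ := exists_mem_eq_sup r (hne r (hl r hr)) c
    exact ⟨x, mem_inter.2 ⟨mem_maxColorAlg.2 ⟨r, hr, hx, hxmax.symm⟩, hx⟩⟩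

theorem isCompetitive_maxColorAlg {R : Set (Finset X)} (hI : IType R) {c : X → ℕ} {k : ℕ}
    (hck : ∀ x, c x < k) (hc : ∀ r ∈ R, HasUniqueMax c r) :
    IsCompetitive R (maxColorAlg c) k := by
  intro l hl S hS
  have hwitness : ∀ x ∈ maxColorAlg c l,
      ∃ r ∈ l, ∃ s ∈ S, x ∈ r ∧ s ∈ r ∧ c x = r.sup c := by
    intro x hx
    obtain ⟨r, hr, hxr, hxmax⟩ := mem_maxColorAlg.1 hx
    obtain ⟨s, hs⟩ := hS r hr
    exact ⟨r, hr, s, (mem_inter.1 hs).1, hxr, (mem_inter.1 hs).2, hxmax⟩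
  choose! r hr s hs hxr hsr hxmax using hwitness
  calc (maxColorAlg c l).card ≤ (range k ×ˢ S).card := by
        refine card_le_card_of_injOn (fun x => (c x, s x)) (fun x hx => ?_) ?_
        · exact mem_product.2 ⟨mem_range.2 (hck x), hs x hx⟩
        · intro x₁ hx₁ x₂ hx₂ hx₁₂
          obtain ⟨hcx, hsx⟩ := Prod.mk.inj hx₁₂
          exact hI.eq_of_hasUniqueMax hc (hl _ (hr x₁ hx₁)) (hl _ (hr x₂ hx₂))
            ⟨s x₂, mem_inter.2 ⟨hsx ▸ hsr x₁ hx₁, hsr x₂ hx₂⟩⟩ (hxr x₁ hx₁) (hxr x₂ hx₂)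
            (hxmax x₁ hx₁) (hxmax x₂ hx₂) hcx
    _ = k * S.card := by simp

end MaxColorAlgorithm

section Adversary

variable {R : Set (Finset X)}

theorem UniqueMaxColorableOn.insert {U : Finset X} {m : ℕ}
    (h : UniqueMaxColorableOn R U m) (a : X) :
    UniqueMaxColorableOn R (insert a U) (m + 1) := by
  by_cases haU : a ∈ U
  · rw [insert_eq_of_mem haU]
    exact h.mono m.le_succ
  obtain ⟨c, hcm, hc⟩ := h
  refine ⟨Function.update c a m, fun x hx => ?_, fun r hr hrU => ?_⟩
  · rcases mem_insert.1 hx with rfl | hx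
    · simp
    · simpa [ne_of_mem_of_not_mem hx haU] using (hcm x hx).trans_le m.le_succ
  by_cases har : a ∈ r
  · refine hasUniqueMax_of_lt har fun y hy hya => ?_
    have hyU : y ∈ U := (mem_insert.1 (hrU hy)).resolve_left hya
    simpa [hya] using hcm y hyU
  · have hrU' : r ⊆ U := (subset_insert_iff_of_notMem har).1 hrU
    exact (hc r hr hrU').congr fun y hy => by
      simp [ne_of_mem_of_not_mem hy har]

theorem UniqueMaxColorableOn.union {U : Finset X} {m : ℕ}
    (h : UniqueMaxColorableOn R U m) (P : Finset X) :
    UniqueMaxColorableOn R (U ∪ P) (m + P.card) := by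
  induction P using Finset.induction_on with
  | empty => simpa using h
  | insert a P haP ih =>
    rw [union_insert, card_insert_of_notMem haP, ← add_assoc]
    exact ih.insert a

theorem UniqueMaxColorableOn.glue {U M : Finset X} {m : ℕ}
    (hM : UniqueMaxColorableOn R M m) (hUM : UniqueMaxColorableOn R (U \ M) m)
    (hclosed : ∀ r ∈ R, r ⊆ U → (r ∩ M).Nonempty → r ⊆ M) :
    UniqueMaxColorableOn R U m := by
  obtain ⟨c₁, hc₁m, hc₁⟩ := hM
  obtain ⟨c₂, hc₂m, hc₂⟩ := hUM
  refine ⟨M.piecewise c₁ c₂, fun x hx => ?_, fun r hr hrU => ?_⟩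
  · by_cases hxM : x ∈ M
    · simpa [hxM] using hc₁m x hxM
    · simpa [hxM] using hc₂m x (mem_sdiff.2 ⟨hx, hxM⟩)
  by_cases hrM : (r ∩ M).Nonempty
  · have hrM' := hclosed r hr hrU hrM
    exact (hc₁ r hr hrM').congr fun y hy => piecewise_eq_of_mem _ _ _ (hrM' hy)
  · have hrUM : r ⊆ U \ M := fun y hy =>
      mem_sdiff.2 ⟨hrU hy, fun hyM => hrM ⟨y, mem_inter.2 ⟨hy, hyM⟩⟩⟩
    exact (hc₂ r hr hrUM).congr fun y hy =>
      piecewise_eq_of_notMem _ _ _ (mem_sdiff.1 (hrUM hy)).2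

theorem IType.exists_closed_range (hI : IType R) {U r₀ : Finset X} (hr₀ : r₀ ∈ R)
    (hr₀U : r₀ ⊆ U) :
    ∃ M ∈ R, r₀ ⊆ M ∧ M ⊆ U ∧ ∀ r ∈ R, r ⊆ U → (r ∩ M).Nonempty → r ⊆ M := by
  classical
  obtain ⟨M, hM, hMmax⟩ :=
    (U.powerset.filter fun M => M ∈ R ∧ r₀ ⊆ M).exists_maximal
      ⟨r₀, mem_filter.2 ⟨mem_powerset.2 hr₀U, hr₀, subset_rfl⟩⟩
  obtain ⟨hMU, hMR, hr₀M⟩ := mem_filter.1 hM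
  refine ⟨M, hMR, hr₀M, mem_powerset.1 hMU, fun r hr hrU hrM => ?_⟩
  have hunion : r ∪ M ∈ U.powerset.filter fun M => M ∈ R ∧ r₀ ⊆ M :=
    mem_filter.2 ⟨mem_powerset.2 (union_subset hrU (mem_powerset.1 hMU)),
      hI r hr M hMR hrM, hr₀M.trans subset_union_right⟩
  exact subset_union_left.trans (hMmax hunion subset_union_right)

theorem uniqueMaxColorableOn_of_isCompetitive (hne : ∀ r ∈ R, r.Nonempty) (hI : IType R)
    (hsep : ∀ x : X, ({x} : Finset X) ∈ R) {A : List (Finset X) → Finset X} {k : ℕ}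
    (hA : IsOnlineAlg R A) (hC : IsCompetitive R A k) (U : Finset X) {l : List (Finset X)}
    (hl : ∀ r ∈ l, r ∈ R) (hUA : Disjoint U (A l)) (hlU : ∀ r ∈ l, U ⊆ r) :
    UniqueMaxColorableOn R U (k - (A l).card) := by
  induction U using Finset.strongInduction generalizing l with
  | H U ih =>
  rcases U.eq_empty_or_nonempty with rfl | ⟨x₀, hx₀⟩
  · exact uniqueMaxColorableOn_empty hne _
  obtain ⟨M, hMR, hx₀M, hMU, hclosed⟩ :=
    hI.exists_closed_range (hsep x₀) (singleton_subset_iff.2 hx₀)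
  replace hx₀M : x₀ ∈ M := singleton_subset_iff.1 hx₀M
  set l' := l ++ [M]
  have hl' : ∀ r ∈ l', r ∈ R := by
    simpa [l', or_imp, forall_and] using ⟨hl, hMR⟩
  have hl'M : ∀ r ∈ l', M ⊆ r := by
    simpa [l', or_imp, forall_and] using fun r hr => hMU.trans (hlU r hr)
  have hnew : (A l' ∩ M).Nonempty := hA.2 l' hl' M (by simp [l'])
  have hinner : UniqueMaxColorableOn R (M \ A l') (k - (A l').card) := by
    refine ih _ ?_ hl' sdiff_disjoint fun r hr => sdiff_subset.trans (hl'M r hr)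
    rw [← sdiff_inter_self_right]
    exact (sdiff_ssubset inter_subset_right hnew).trans_subset hMU
  have houter : UniqueMaxColorableOn R (U \ M) (k - (A l).card) :=
    ih _ (sdiff_ssubset hMU ⟨x₀, hx₀M⟩) hl (disjoint_of_subset_left sdiff_subset hUA)
      fun r hr => sdiff_subset.trans (hlU r hr)
  have hbudget : (A l').card ≤ k := by
    simpa using hC l' hl' {x₀} fun r hr => ⟨x₀, mem_inter.2 ⟨mem_singleton_self x₀,
      hl'M r hr hx₀M⟩⟩
  have hgrowth : (A l).card + (A l' ∩ M).card ≤ (A l').card := by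
    rw [← card_union_of_disjoint (disjoint_of_subset_left (inter_subset_right.trans hMU)
      hUA).symm]
    exact card_le_card (union_subset (hA.1 l M) inter_subset_left)
  have hM : UniqueMaxColorableOn R M (k - (A l).card) := by
    have h := hinner.union (M ∩ A l')
    rw [sdiff_union_inter, inter_comm] at h
    exact h.mono (by omega)
  exact hM.glue houter hclosed

theorem exists_uniqueMax_coloring_of_isCompetitive [Fintype X] (hne : ∀ r ∈ R, r.Nonempty)
    (hI : IType R) (hsep : ∀ x : X, ({x} : Finset X) ∈ R) {A : List (Finset X) → Finset X}
    {k : ℕ} (hA : IsOnlineAlg R A) (hC : IsCompetitive R A k) :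
    ∃ c : X → ℕ, (∀ x, c x < k) ∧ ∀ r ∈ R, HasUniqueMax c r := by
  have hA₀ : A [] = ∅ := by simpa using hC [] (by simp) ∅ (by simp)
  obtain ⟨c, hck, hc⟩ := uniqueMaxColorableOn_of_isCompetitive hne hI hsep hA hC univ
    (l := []) (by simp) (by simp [hA₀]) (by simp)
  exact ⟨c, fun x => by simpa [hA₀] using hck x (mem_univ x),
    fun r hr => hc r hr (subset_univ r)⟩

end Adversary

end UniqueMax

/-- For a finite I-type separable hypergraph, the best competitive ratio of a
deterministic online hitting set algorithm equals the unique-max chromatic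
number: `ρ(H) = χ_um(H)`. -/
theorem competitive_eq_uniqueMaxChromatic {X : Type*} [Fintype X] [DecidableEq X]
    (R : Set (Finset X)) (hne : ∀ r ∈ R, r.Nonempty)
    (hI : IType R) (hsep : ∀ x : X, ({x} : Finset X) ∈ R) :
    sInf {k : ℕ | ∃ A : List (Finset X) → Finset X,
        IsOnlineAlg R A ∧ IsCompetitive R A k}
      = sInf {k : ℕ | ∃ c : X → ℕ, (∀ x, c x < k) ∧
          ∀ r ∈ R, ∃! x, x ∈ r ∧ c x = r.sup c} := by
  congr 1
  ext k
  constructor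
  · rintro ⟨A, hA, hC⟩
    exact exists_uniqueMax_coloring_of_isCompetitive hne hI hsep hA hC
  · rintro ⟨c, hck, hc⟩
    exact ⟨maxColorAlg c, isOnlineAlg_maxColorAlg hne c, isCompetitive_maxColorAlg hI hck hc⟩
end

section
/- Let H=(X,R) be an I-type hypergraph with a unique-max coloring using k colors. Then the online algorithm that stabs each unstabbed arriving range by its unique maximum-color point has competitive ratio at most k: for every finite sequence σ of ranges, the number of points chosen by the algorithm is at most k times the size of a minimum hitting set of σ. -/
/-- The greedy online hitting set algorithm: process the ranges of the list
(latest arrival first in the list structure, i.e. recursion processes earlier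
arrivals first); an arriving range already stabbed is ignored, otherwise it is
stabbed by its designated stabbing point `stab r`. -/
def greedyAlg {X : Type*} [DecidableEq X] (stab : Finset X → X) :
    List (Finset X) → Finset X
  | [] => ∅
  | r :: l =>
      let C := greedyAlg stab l
      if (r ∩ C).Nonempty then C else insert (stab r) C

open scoped Finset

/-! The ranges stabbed by the algorithm are pairwise disjoint within each color class of their
stabbing points: if a new range met an earlier stabbed range of the same maximum color, their
union would be a range (I-type) whose unique maximum is both stabbing points, so the new range
would already contain a chosen point. A hitting set needs a separate point for each range of a
pairwise disjoint family, so each of the `k` color classes has at most `|S|` members. -/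

theorem Finset.card_le_card_of_pairwiseDisjoint_of_inter_nonempty {α : Type*} [DecidableEq α]
    {T : Finset (Finset α)} {S : Finset α} (hT : (T : Set (Finset α)).PairwiseDisjoint id)
    (hS : ∀ r ∈ T, (S ∩ r).Nonempty) : #T ≤ #S := by
  refine Finset.card_le_card_of_forall_subsingleton (fun r x => x ∈ r)
    (fun r hr => (hS r hr).imp fun _ hx => Finset.mem_inter.mp hx) ?_
  rintro x - r₁ ⟨hr₁, hx₁⟩ r₂ ⟨hr₂, hx₂⟩
  by_contra hne
  exact Finset.disjoint_left.mp (hT hr₁ hr₂ hne) hx₁ hx₂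

section UniqueMax

variable {X β : Type*} [DecidableEq X] [SemilatticeSup β] [OrderBot β]

theorem IType.eq_of_color_eq_of_inter_nonempty {R : Set (Finset X)} (hI : IType R) {c : X → β}
    (hum : ∀ r ∈ R, ∃! x, x ∈ r ∧ c x = r.sup c) {r₁ r₂ : Finset X} (h₁ : r₁ ∈ R) (h₂ : r₂ ∈ R)
    (hr : (r₁ ∩ r₂).Nonempty) {x₁ x₂ : X} (hx₁ : x₁ ∈ r₁) (hcx₁ : c x₁ = r₁.sup c)
    (hx₂ : x₂ ∈ r₂) (hcx₂ : c x₂ = r₂.sup c) (hc : c x₁ = c x₂) : x₁ = x₂ := by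
  have hsup : (r₁ ∪ r₂).sup c = c x₁ := by
    rw [Finset.sup_union, ← hcx₁, ← hcx₂, ← hc, sup_idem]
  obtain ⟨x, -, hx⟩ := hum _ (hI r₁ h₁ r₂ h₂ hr)
  exact (hx x₁ ⟨Finset.mem_union_left _ hx₁, hsup.symm⟩).trans
    (hx x₂ ⟨Finset.mem_union_right _ hx₂, (hsup.trans hc).symm⟩).symm

end UniqueMax

namespace GreedyStabbing

variable {X : Type*} [DecidableEq X] (stab : Finset X → X)

/-- The ranges that were unstabbed on arrival, each contributing its point `stab r`. -/
def stabbedRanges : List (Finset X) → Finset (Finset X)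
  | [] => ∅
  | r :: l =>
      if (r ∩ greedyAlg stab l).Nonempty then stabbedRanges l
      else insert r (stabbedRanges l)

theorem greedyAlg_eq_image_stabbedRanges (l : List (Finset X)) :
    greedyAlg stab l = (stabbedRanges stab l).image stab := by
  induction l with
  | nil => rfl
  | cons r l ih =>
    simp only [greedyAlg, stabbedRanges]
    split_ifs
    · exact ih
    · rw [Finset.image_insert, ih]

theorem mem_of_mem_stabbedRanges {l : List (Finset X)} {r : Finset X}
    (hr : r ∈ stabbedRanges stab l) : r ∈ l := by
  induction l with
  | nil => simp [stabbedRanges] at hr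
  | cons a l ih =>
    simp only [stabbedRanges] at hr
    split_ifs at hr
    · exact List.mem_cons_of_mem _ (ih hr)
    · rcases Finset.mem_insert.mp hr with rfl | hr
      · exact List.mem_cons_self
      · exact List.mem_cons_of_mem _ (ih hr)

variable {β : Type*} [SemilatticeSup β] [OrderBot β] {R : Set (Finset X)} {c : X → β}

theorem disjoint_stabbedRanges_of_not_stabbed (hI : IType R)
    (hum : ∀ r ∈ R, ∃! x, x ∈ r ∧ c x = r.sup c)
    (hstab : ∀ r ∈ R, stab r ∈ r ∧ c (stab r) = r.sup c)
    {l : List (Finset X)} (hl : ∀ r ∈ l, r ∈ R) {a r : Finset X} (ha : a ∈ R)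
    (hfree : ¬(a ∩ greedyAlg stab l).Nonempty) (hr : r ∈ stabbedRanges stab l)
    (hc : c (stab a) = c (stab r)) : Disjoint a r := by
  rw [Finset.disjoint_iff_inter_eq_empty, ← Finset.not_nonempty_iff_eq_empty]
  intro hne
  have hrR := hl r (mem_of_mem_stabbedRanges stab hr)
  have heq : stab a = stab r := hI.eq_of_color_eq_of_inter_nonempty hum ha hrR hne
    (hstab a ha).1 (hstab a ha).2 (hstab r hrR).1 (hstab r hrR).2 hc
  refine hfree ⟨stab a, Finset.mem_inter.mpr ⟨(hstab a ha).1, ?_⟩⟩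
  rw [greedyAlg_eq_image_stabbedRanges, heq]
  exact Finset.mem_image_of_mem stab hr

theorem pairwiseDisjoint_stabbedRanges_color [DecidableEq β] (hI : IType R)
    (hum : ∀ r ∈ R, ∃! x, x ∈ r ∧ c x = r.sup c)
    (hstab : ∀ r ∈ R, stab r ∈ r ∧ c (stab r) = r.sup c)
    {l : List (Finset X)} (hl : ∀ r ∈ l, r ∈ R) (γ : β) :
    (({r ∈ stabbedRanges stab l | c (stab r) = γ} : Finset _) : Set (Finset X)).PairwiseDisjoint
      id := by
  induction l with
  | nil => simp [stabbedRanges]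
  | cons a l ih =>
    have hl' : ∀ r ∈ l, r ∈ R := fun r hr => hl r (List.mem_cons_of_mem _ hr)
    simp only [stabbedRanges]
    split_ifs with hfree
    · exact ih hl'
    rw [Finset.filter_insert]
    split_ifs with hγ
    · rw [Finset.coe_insert, Set.pairwiseDisjoint_insert]
      refine ⟨ih hl', fun r hr _ => ?_⟩
      obtain ⟨hr, hcr⟩ := Finset.mem_filter.mp hr
      exact disjoint_stabbedRanges_of_not_stabbed stab hI hum hstab hl' (hl a List.mem_cons_self)
        hfree hr (hγ.trans hcr.symm)
    · exact ih hl'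

end GreedyStabbing

open GreedyStabbing in
/-- In an I-type hypergraph with a unique-max coloring with colors `{1,…,k}`,
the online algorithm stabbing each unstabbed arriving range by its unique
maximum-color point is `k`-competitive: the number of chosen points is at most
`k` times the size of any hitting set of the presented ranges. -/
theorem greedy_competitive {X : Type*} [DecidableEq X]
    (R : Set (Finset X)) (hI : IType R)
    (k : ℕ) (c : X → ℕ) (hcol : ∀ x, 1 ≤ c x ∧ c x ≤ k)
    (hum : ∀ r ∈ R, ∃! x, x ∈ r ∧ c x = r.sup c)
    (stab : Finset X → X)
    (hstab : ∀ r ∈ R, stab r ∈ r ∧ c (stab r) = r.sup c)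
    (l : List (Finset X)) (hl : ∀ r ∈ l, r ∈ R)
    (S : Finset X) (hS : ∀ r ∈ l, (S ∩ r).Nonempty) :
    (greedyAlg stab l).card ≤ k * S.card := by
  set T := stabbedRanges stab l
  have hcolor_class : ∀ γ ∈ Finset.Icc 1 k, #{r ∈ T | c (stab r) = γ} ≤ #S := fun γ _ =>
    Finset.card_le_card_of_pairwiseDisjoint_of_inter_nonempty
      (pairwiseDisjoint_stabbedRanges_color stab hI hum hstab hl γ)
      fun r hr => hS r (mem_of_mem_stabbedRanges stab (Finset.mem_filter.mp hr).1)
  calc (greedyAlg stab l).card = #(T.image stab) := by rw [greedyAlg_eq_image_stabbedRanges]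
    _ ≤ #T := Finset.card_image_le
    _ ≤ #S * #(Finset.Icc 1 k) := Finset.card_le_mul_card_image_of_maps_to
        (fun r _ => Finset.mem_Icc.mpr (hcol (stab r))) _ hcolor_class
    _ = k * #S := by rw [Nat.card_Icc, Nat.add_sub_cancel, mul_comm]
end
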